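/- arXiv:1610.05354 — 6 statements merged into one kernel-verified Lean document; each statement's English description precedes it below -/
import Mathlib

section
/- Let n ≥ k' > k be non-negative integers and let μ, ν be partitions of n. If N(μ/τ) = N(ν/τ) for every partition τ of n−k, then N(μ/σ) = N(ν/σ) for every partition σ of n−k'. (Here N(λ/τ) denotes the number of standard Young tableaux of skew shape λ/τ, with N(λ/τ) = 0 when τ is not contained in λ.) -/
/-! Deleting the first step of a saturated chain from `σ` to `λ ≠ σ` gives
`N(λ/σ) = Σ_{τ ∈ Add(σ)} N(λ/τ)`. So if `N(μ/·)` and `N(ν/·)` agree on all diagrams with `m`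
cells (`m ≤ |μ|, |ν|`), they agree on every diagram with fewer cells, by induction on the
difference in size. -/

/-- The hook length of the cell `(i, j)` (0-indexed) in a Young diagram. -/
def hookLen (lam : YoungDiagram) (i j : ℕ) : ℕ :=
  (lam.rowLen i - j) + (lam.colLen j - i) - 1

/-- The excitation factor `E_m(λ)` of the one-row partition `[m]` in `λ`:
`Σ_{i₁ ≤ … ≤ i_m} h_{i₁,i₁}·h_{i₂,i₂+1}⋯h_{i_m,i_m+m−1}` over tuples such that each
cell `(i_t, i_t + t − 1)` lies in `λ` (0-indexed here: cell `(f t, f t + t)`). -/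
noncomputable def excite (lam : YoungDiagram) (m : ℕ) : ℕ :=
  ∑ᶠ f ∈ {f : Fin m → ℕ | Monotone f ∧ ∀ t : Fin m, (f t, f t + (t : ℕ)) ∈ lam},
    ∏ t : Fin m, hookLen lam (f t) (f t + (t : ℕ))

/-- `b` is obtained from `a` by adding a single cell. -/
def AddCell (a b : YoungDiagram) : Prop := a ≤ b ∧ b.card = a.card + 1

/-- `skewSYT lam mu` is the number of standard Young tableaux of skew shape `lam / mu`,
counted as the number of saturated chains of Young diagrams from `mu` to `lam`
(each step adding one cell); it is `0` if `mu` is not contained in `lam`. -/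
noncomputable def skewSYT (lam mu : YoungDiagram) : ℕ :=
  Nat.card {c : List YoungDiagram //
    c.Chain' AddCell ∧ c.head? = some mu ∧ c.getLast? = some lam}

namespace YoungDiagram

lemma fst_lt_card {d : YoungDiagram} {c : ℕ × ℕ} (h : c ∈ d) : c.1 < d.card :=
  (mem_iff_lt_colLen.mp h).trans_le
    (d.colLen_eq_card ▸ Finset.card_le_card (Finset.filter_subset _ _))

lemma snd_lt_card {d : YoungDiagram} {c : ℕ × ℕ} (h : c ∈ d) : c.2 < d.card :=
  (mem_iff_lt_rowLen.mp h).trans_le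
    (d.rowLen_eq_card ▸ Finset.card_le_card (Finset.filter_subset _ _))

lemma finite_setOf_card_le (m : ℕ) : {d : YoungDiagram | d.card ≤ m}.Finite := by
  refine ((Finset.range m ×ˢ Finset.range m).powerset.finite_toSet.preimage
    (fun _ _ _ _ h => YoungDiagram.ext h)).subset fun d (hd : d.card ≤ m) =>
      Finset.mem_powerset.mpr fun c hc => ?_
  rw [mem_cells] at hc
  exact Finset.mem_product.mpr ⟨Finset.mem_range.mpr ((fst_lt_card hc).trans_le hd),
    Finset.mem_range.mpr ((snd_lt_card hc).trans_le hd)⟩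

end YoungDiagram

open YoungDiagram

lemma List.finite_setOf_forall_mem_length_le {α : Type*} {s : Set α} (hs : s.Finite) (n : ℕ) :
    {l : List α | (∀ x ∈ l, x ∈ s) ∧ l.length ≤ n}.Finite := by
  have := hs.to_subtype
  refine ((List.finite_length_le s n).image (List.map Subtype.val)).subset ?_
  rintro l ⟨hl, hlen⟩
  exact ⟨l.attachWith (· ∈ s) hl, by simpa using hlen, List.attachWith_map_subtype_val hl⟩

lemma finite_setOf_addCell (σ : YoungDiagram) : {τ | AddCell σ τ}.Finite :=
  (finite_setOf_card_le (σ.card + 1)).subset fun _ hτ => hτ.2.le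

noncomputable def addCells (σ : YoungDiagram) : Finset YoungDiagram :=
  (finite_setOf_addCell σ).toFinset

lemma mem_addCells {σ τ : YoungDiagram} : τ ∈ addCells σ ↔ AddCell σ τ :=
  Set.Finite.mem_toFinset _

def skewChains (lam mu : YoungDiagram) : Set (List YoungDiagram) :=
  {c | c.IsChain AddCell ∧ c.head? = some mu ∧ c.getLast? = some lam}

lemma skewSYT_eq_card_skewChains (lam mu : YoungDiagram) :
    skewSYT lam mu = Nat.card (skewChains lam mu) :=
  rfl

lemma card_getLast_eq_card_add_length :
    ∀ {a : YoungDiagram} {t : List YoungDiagram}, (a :: t).IsChain AddCell →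
      ((a :: t).getLast (List.cons_ne_nil a t)).card = a.card + t.length
  | _, [], _ => rfl
  | _, _ :: _, h => by
    rw [List.isChain_cons_cons] at h
    rw [List.getLast_cons_cons, card_getLast_eq_card_add_length h.2, h.1.2, List.length_cons]
    omega

lemma finite_skewChains (lam mu : YoungDiagram) : (skewChains lam mu).Finite := by
  refine (List.finite_setOf_forall_mem_length_le (finite_setOf_card_le lam.card)
    (lam.card + 1)).subset ?_
  rintro c ⟨hc, hhead, hlast⟩
  obtain ⟨t, rfl⟩ := List.head?_eq_some_iff.mp hhead
  have hlast : (mu :: t).getLast (List.cons_ne_nil mu t) = lam :=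
    Option.some_injective _ ((List.getLast?_eq_some_getLast _).symm.trans hlast)
  refine ⟨hc.backwards_induction (·.card ≤ lam.card) _
    (fun x y (hxy : AddCell x y) (hy : y.card ≤ lam.card) =>
      Nat.le_of_succ_le (hxy.2.symm.trans_le hy))
    (fun _ => hlast ▸ le_rfl), ?_⟩
  have := card_getLast_eq_card_add_length hc
  rw [hlast] at this
  simp only [List.length_cons]
  omega

lemma cons_mem_skewChains {lam mu τ : YoungDiagram} {c : List YoungDiagram} (hτ : AddCell mu τ)
    (hc : c ∈ skewChains lam τ) : mu :: c ∈ skewChains lam mu := by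
  obtain ⟨hchain, hhead, hlast⟩ := hc
  obtain ⟨t, rfl⟩ := List.head?_eq_some_iff.mp hhead
  exact ⟨List.isChain_cons_cons.mpr ⟨hτ, hchain⟩, rfl, by rwa [List.getLast?_cons_cons]⟩

lemma exists_cons_of_mem_skewChains {lam mu : YoungDiagram} {c : List YoungDiagram}
    (hne : mu ≠ lam) (hc : c ∈ skewChains lam mu) :
    ∃ τ, AddCell mu τ ∧ ∃ c' ∈ skewChains lam τ, c = mu :: c' := by
  obtain ⟨hchain, hhead, hlast⟩ := hc
  obtain ⟨t, rfl⟩ := List.head?_eq_some_iff.mp hhead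
  cases t with
  | nil => exact absurd (Option.some_injective _ hlast) hne
  | cons τ r =>
    rw [List.isChain_cons_cons] at hchain
    rw [List.getLast?_cons_cons] at hlast
    exact ⟨τ, hchain.1, τ :: r, ⟨hchain.2, rfl, hlast⟩, rfl⟩

def consSkewChains (lam mu : YoungDiagram) :
    (Σ τ : addCells mu, skewChains lam τ) → skewChains lam mu :=
  fun p => ⟨mu :: p.2, cons_mem_skewChains (mem_addCells.mp p.1.2) p.2.2⟩

lemma consSkewChains_bijective {lam mu : YoungDiagram} (hne : mu ≠ lam) :
    Function.Bijective (consSkewChains lam mu) := by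
  constructor
  · rintro ⟨τ₁, c₁, hc₁⟩ ⟨τ₂, c₂, hc₂⟩ heq
    obtain rfl : c₁ = c₂ := List.cons_injective (congrArg Subtype.val heq)
    exact Sigma.subtype_ext (Subtype.ext (Option.some_injective _ (hc₁.2.1.symm.trans hc₂.2.1)))
      rfl
  · rintro ⟨c, hc⟩
    obtain ⟨τ, hτ, c', hc', rfl⟩ := exists_cons_of_mem_skewChains hne hc
    exact ⟨⟨⟨τ, mem_addCells.mpr hτ⟩, c', hc'⟩, rfl⟩

theorem skewSYT_eq_sum_addCells {lam mu : YoungDiagram} (hne : mu ≠ lam) :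
    skewSYT lam mu = ∑ τ ∈ addCells mu, skewSYT lam τ := by
  have (τ : YoungDiagram) : Finite (skewChains lam τ) := (finite_skewChains lam τ).to_subtype
  rw [← Finset.sum_coe_sort, skewSYT_eq_card_skewChains,
    ← Nat.card_eq_of_bijective _ (consSkewChains_bijective hne), Nat.card_sigma]
  rfl

theorem skewSYT_eq_of_forall_card_eq {μ ν : YoungDiagram} {m : ℕ} (hμ : m ≤ μ.card)
    (hν : m ≤ ν.card) (h : ∀ τ : YoungDiagram, τ.card = m → skewSYT μ τ = skewSYT ν τ)
    (σ : YoungDiagram) (hσ : σ.card ≤ m) : skewSYT μ σ = skewSYT ν σ := by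
  obtain ⟨d, hd⟩ := Nat.exists_eq_add_of_le hσ
  induction d generalizing σ with
  | zero => exact h σ hd.symm
  | succ d ih =>
    have hne {lam : YoungDiagram} (hlam : m ≤ lam.card) : σ ≠ lam := by
      rintro rfl
      omega
    rw [skewSYT_eq_sum_addCells (hne hμ), skewSYT_eq_sum_addCells (hne hν)]
    refine Finset.sum_congr rfl fun τ hτ => ih τ ?_ ?_ <;>
    · have := (mem_addCells.mp hτ).2
      omega

theorem minor_multiset_mono_general (n k k' : ℕ) (hkk' : k < k')
    (μ ν : YoungDiagram) (hμ : μ.card = n) (hν : ν.card = n)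
    (h : ∀ τ : YoungDiagram, τ.card = n - k → skewSYT μ τ = skewSYT ν τ) :
    ∀ σ : YoungDiagram, σ.card = n - k' → skewSYT μ σ = skewSYT ν σ := fun σ hσ =>
  skewSYT_eq_of_forall_card_eq (by omega) (by omega) h σ (by omega)

/-- if two partitions of n have the same multiset of k-minors, then they
have the same multiset of k'-minors for every n ≥ k' > k. -/
theorem minor_multiset_mono (n k k' : ℕ) (hkk' : k < k') (hk'n : k' ≤ n)
    (μ ν : YoungDiagram) (hμ : μ.card = n) (hν : ν.card = n)
    (h : ∀ τ : YoungDiagram, τ.card = n - k → skewSYT μ τ = skewSYT ν τ) :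
    ∀ σ : YoungDiagram, σ.card = n - k' → skewSYT μ σ = skewSYT ν σ :=
  minor_multiset_mono_general n k k' hkk' μ ν hμ hν h
end

section
/- Let λ be a partition with first row of length k = λ₁ and first-row hook lengths a₁ > a₂ > … > a_k. Then for every non-negative integer m ≤ k, E_m(λ) equals the coefficient of X^m in the power series (1+a₁X)(1+a₂X)⋯(1+a_kX) / ((1+X)(1+2X)⋯(1+(k−m)X)). -/
/-!
Splitting the excited diagrams of `[m + 1]` placed at `(p, q)` according to whether the first cell
stays put gives `E(m + 1; p, q) = h(p, q) E(m; p, q + 1) + E(m + 1; p + 1, q + 1)`, and the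
coefficients of the series obey the same recursion. Dividing out the factor `1 + h(p, q) X` gives
the first term. For the second, the remaining hooks of row `p` are those of row `p + 1` shifted by
a constant `e`, together with `1, …, e - 1`; the latter cancel against the denominator, and the
shift by `e` does not change the coefficient: with `u = X / (1 + X)` one has
`1 + (c + 1) X = (1 + X) (1 + c u)` and `[X^(n+1)] (1 + X)^n G(u) = [X^(n+1)] G`.
-/

open Finset Matrix PowerSeries

namespace PowerSeries

variable {K : Type*} [Field K]

noncomputable def linProd {ι : Type*} (s : Finset ι) (c : ι → K) : K⟦X⟧ :=
  ∏ i ∈ s, (1 + C (c i) * X)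

section linProd

variable {ι κ : Type*}

@[simp]
theorem constantCoeff_linProd (s : Finset ι) (c : ι → K) : constantCoeff (linProd s c) = 1 := by
  simp [linProd, map_prod]

theorem linProd_mul_linProd (s : Finset ι) (t : Finset κ) (c : ι → K) (c' : κ → K) :
    linProd s c * linProd t c' = linProd (s.disjSum t) (Sum.elim c c') := by
  simp [linProd, prod_disjSum]

theorem coeff_succ_one_add_C_mul_X_mul (a : K) (F : K⟦X⟧) (n : ℕ) :
    coeff (n + 1) ((1 + C a * X) * F) = coeff (n + 1) F + a * coeff n F := by
  rw [add_mul, one_mul, map_add, mul_assoc, coeff_C_mul, coeff_succ_X_mul]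

theorem coeff_linProd_of_card_lt (s : Finset ι) (c : ι → K) {n : ℕ} (h : s.card < n) :
    coeff n (linProd s c) = 0 := by
  classical
  induction s using Finset.induction generalizing n with
  | empty => simp [linProd, coeff_one, Nat.pos_iff_ne_zero.mp h]
  | @insert a s ha ih =>
    rw [card_insert_of_notMem ha] at h
    obtain ⟨n, rfl⟩ := Nat.exists_eq_add_one_of_ne_zero (Nat.ne_zero_of_lt h)
    rw [linProd, prod_insert ha, ← linProd, coeff_succ_one_add_C_mul_X_mul, ih (by omega),
      ih (by omega), mul_zero, add_zero]

theorem one_add_X_pow_eq_linProd (n : ℕ) : (1 + X : K⟦X⟧) ^ n = linProd (range n) 1 := by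
  simp [linProd]

theorem linProd_range_add_natCast (a b : ℕ) :
    linProd (range (a + b)) (fun i ↦ (i : K)) =
      linProd (range a) (fun i ↦ (i : K)) * linProd (range b) (fun i ↦ (i : K) + a) := by
  simp only [linProd, prod_range_add, Nat.cast_add, add_comm]

theorem linProd_range_sub_natCast (n : ℕ) :
    linProd (range n) (fun i ↦ ((n - i : ℕ) : K)) =
      linProd (range (n + 1)) (fun i ↦ (i : K)) := by
  rw [linProd, linProd, prod_range_succ', ← prod_range_reflect]
  simp only [Nat.cast_zero, map_zero, zero_mul, add_zero, mul_one]
  refine prod_congr rfl fun i hi ↦ ?_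
  rw [show n - (n - 1 - i) = i + 1 by have := mem_range.1 hi; omega]

theorem linProd_range_succ_natCast (n : ℕ) :
    linProd (range (n + 1)) (fun i ↦ (i : K)) = ∏ i ∈ Icc 1 n, (1 + C (i : K) * X) := by
  rw [linProd, prod_range_succ', range_eq_Ico, prod_Ico_add' (fun i : ℕ ↦ 1 + C (i : K) * X),
    Ico_add_one_right_eq_Icc]
  simp

end linProd

theorem mul_mul_mul_inv_cancel_left {A B C : K⟦X⟧} (hB : constantCoeff B ≠ 0) :
    A * B * (B * C)⁻¹ = A * C⁻¹ := by
  rw [PowerSeries.mul_inv_rev, mul_comm C⁻¹, ← mul_assoc, mul_assoc A,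
    PowerSeries.mul_inv_cancel _ hB, mul_one]

theorem mul_mul_mul_inv_cancel_right {A B C : K⟦X⟧} (hB : constantCoeff B ≠ 0) :
    A * (B * C) * B⁻¹ = A * C := by
  rw [mul_comm B, ← mul_assoc, mul_assoc, PowerSeries.mul_inv_cancel _ hB, mul_one]

theorem hasSubst_X_mul_one_add_X_inv : HasSubst (X * (1 + X)⁻¹ : K⟦X⟧) :=
  HasSubst.of_constantCoeff_zero' (by simp)

theorem coeff_one_add_X_pow_mul_X_mul_inv_pow (n k : ℕ) :
    coeff (n + 1) ((1 + X) ^ n * (X * (1 + X)⁻¹) ^ k : K⟦X⟧) =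
      if k = n + 1 then 1 else 0 := by
  have hw (j : ℕ) : coeff (j + 1) ((1 + X : K⟦X⟧) ^ j) = 0 := by
    rw [one_add_X_pow_eq_linProd, coeff_linProd_of_card_lt _ _ (by simp)]
  have hv : constantCoeff (1 + X : K⟦X⟧)⁻¹ = 1 := by simp
  have hunit : (1 + X : K⟦X⟧) * (1 + X)⁻¹ = 1 := PowerSeries.mul_inv_cancel _ (by simp)
  -- made atomic so that `ring_nf` does not expand the powers of `1 + X`
  generalize (1 + X : K⟦X⟧)⁻¹ = v at hv hunit
  generalize (1 + X : K⟦X⟧) = w at hw hunit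
  rcases lt_trichotomy k (n + 1) with hk | rfl | hk
  · obtain ⟨j, rfl⟩ := Nat.exists_eq_add_of_le (Nat.le_of_lt_succ hk)
    calc coeff (k + j + 1) (w ^ (k + j) * (X * v) ^ k)
        = coeff (k + j + 1) (X ^ k * w ^ j * (w * v) ^ k) := by ring_nf
      _ = 0 := by
        rw [hunit, one_pow, mul_one, coeff_X_pow_mul', if_pos (by omega),
          show k + j + 1 - k = j + 1 by omega, hw]
      _ = _ := (if_neg hk.ne).symm
  · calc coeff (n + 1) (w ^ n * (X * v) ^ (n + 1))
        = coeff (n + 1) (X ^ (n + 1) * v * (w * v) ^ n) := by ring_nf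
      _ = 1 := by
        rw [hunit, one_pow, mul_one, coeff_X_pow_mul', if_pos le_rfl, Nat.sub_self,
          coeff_zero_eq_constantCoeff_apply, hv]
      _ = _ := (if_pos rfl).symm
  · rw [if_neg hk.ne', mul_pow, mul_left_comm, coeff_X_pow_mul', if_neg (by omega)]

theorem coeff_one_add_X_pow_mul_subst (n : ℕ) (G : K⟦X⟧) :
    coeff (n + 1) ((1 + X) ^ n * G.subst (X * (1 + X)⁻¹ : K⟦X⟧)) = coeff (n + 1) G := by
  have hu := hasSubst_X_mul_one_add_X_inv (K := K)
  set u : K⟦X⟧ := X * (1 + X)⁻¹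
  have htail (H : K⟦X⟧) : coeff (n + 1) ((1 + X) ^ n * (X ^ (n + 2) * H).subst u) = 0 := by
    rw [subst_mul hu, subst_pow hu, subst_X hu, mul_pow, mul_left_comm, mul_assoc,
      coeff_X_pow_mul', if_neg (by omega)]
  have hhead :
      coeff (n + 1) ((1 + X) ^ n * (trunc (n + 2) G : K⟦X⟧).subst u) = coeff (n + 1) G := by
    rw [subst_coe hu, Polynomial.aeval_def, eval₂_trunc_eq_sum_range, mul_sum, map_sum]
    simp_rw [u, ← C_eq_algebraMap, mul_left_comm _ (C _), coeff_C_mul,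
      coeff_one_add_X_pow_mul_X_mul_inv_pow, mul_ite, mul_one, mul_zero]
    simp
  conv_lhs => rw [eq_X_pow_mul_shift_add_trunc (n + 2) G]
  rw [subst_add hu, mul_add, map_add, htail, hhead, zero_add]

theorem one_add_C_add_one_mul_X (a : K) :
    (1 + C (a + 1) * X : K⟦X⟧) =
      (1 + X) * (1 + C a * X).subst (X * (1 + X)⁻¹ : K⟦X⟧) := by
  have hu := hasSubst_X_mul_one_add_X_inv (K := K)
  have hunit : (1 + X : K⟦X⟧) * (1 + X)⁻¹ = 1 := PowerSeries.mul_inv_cancel _ (by simp)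
  set φ := substAlgHom (R := K) hu
  rw [← coe_substAlgHom hu, map_add φ, map_one φ, map_mul φ, substAlgHom_X,
    ← algebraMap_eq (R := K), AlgHom.commutes, algebraMap_eq, map_add, map_one]
  linear_combination (-C a * X) * hunit

section shift

variable {ι κ : Type*}

theorem linProd_add_one (s : Finset ι) (c : ι → K) :
    linProd s (fun i ↦ c i + 1) =
      (1 + X) ^ s.card * (linProd s c).subst (X * (1 + X)⁻¹ : K⟦X⟧) := by
  rw [linProd, linProd, ← coe_substAlgHom hasSubst_X_mul_one_add_X_inv, map_prod, ← prod_const,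
    ← prod_mul_distrib]
  simp_rw [coe_substAlgHom, one_add_C_add_one_mul_X]

theorem coeff_linProd_add_one_mul_inv {s : Finset ι} {t : Finset κ} {n : ℕ}
    (h : s.card = t.card + n) (c : ι → K) (c' : κ → K) :
    coeff (n + 1) (linProd s (fun i ↦ c i + 1) * (linProd t (fun i ↦ c' i + 1))⁻¹) =
      coeff (n + 1) (linProd s c * (linProd t c')⁻¹) := by
  have hu := hasSubst_X_mul_one_add_X_inv (K := K)
  set u : K⟦X⟧ := X * (1 + X)⁻¹
  suffices linProd s (fun i ↦ c i + 1) * (linProd t (fun i ↦ c' i + 1))⁻¹ =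
      (1 + X) ^ n * (linProd s c * (linProd t c')⁻¹).subst u by
    rw [this, coeff_one_add_X_pow_mul_subst]
  have hsubst : (linProd s c * (linProd t c')⁻¹).subst u * (linProd t c').subst u =
      (linProd s c).subst u := by
    rw [← subst_mul hu, mul_assoc, PowerSeries.inv_mul_cancel _ (by simp), mul_one]
  rw [eq_comm, eq_mul_inv_iff_mul_eq (by simp), linProd_add_one, linProd_add_one, h, pow_add,
    ← hsubst]
  ring

theorem coeff_linProd_add_natCast_mul_inv {s : Finset ι} {t : Finset κ} {n : ℕ}
    (h : s.card = t.card + n) (c : ι → K) (c' : κ → K) (d : ℕ) :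
    coeff (n + 1) (linProd s (fun i ↦ c i + d) * (linProd t (fun i ↦ c' i + d))⁻¹) =
      coeff (n + 1) (linProd s c * (linProd t c')⁻¹) := by
  induction d with
  | zero => simp
  | succ d ih =>
    simp_rw [Nat.cast_succ, ← add_assoc]
    rw [coeff_linProd_add_one_mul_inv h, ih]

end shift

end PowerSeries

namespace YoungDiagram

variable (lam : YoungDiagram)

theorem hookLen_eq_hookLen_succ_add {i j : ℕ} (h : (i + 1, j) ∈ lam) :
    hookLen lam i j = hookLen lam (i + 1) j + (lam.rowLen i - lam.rowLen (i + 1) + 1) := by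
  have hrow := lam.rowLen_anti i (i + 1) i.le_succ
  have hj := mem_iff_lt_rowLen.1 h
  have hi := mem_iff_lt_colLen.1 h
  unfold hookLen
  omega

theorem hookLen_of_succ_notMem {i j : ℕ} (h : (i, j) ∈ lam) (h' : (i + 1, j) ∉ lam) :
    hookLen lam i j = lam.rowLen i - j := by
  have hj := mem_iff_lt_rowLen.1 h
  have hi := mem_iff_lt_colLen.1 h
  rw [mem_iff_lt_colLen] at h'
  unfold hookLen
  omega

/-- Cell `t` of the row `[m]` with first cell at `(p, q)` is moved `f t` steps down the diagonal. -/
def excitedSet (m p q : ℕ) : Set (Fin m → ℕ) :=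
  {f | Monotone f ∧ ∀ t, (f t + p, f t + t + q) ∈ lam}

noncomputable def exciteFrom (m p q : ℕ) : ℕ :=
  ∑ᶠ f ∈ lam.excitedSet m p q, ∏ t, hookLen lam (f t + p) (f t + t + q)

theorem excite_eq_exciteFrom (m : ℕ) : excite lam m = lam.exciteFrom m 0 0 := by
  simp [excite, exciteFrom, excitedSet]

theorem excitedSet_finite (m p q : ℕ) : (lam.excitedSet m p q).Finite := by
  refine (Set.Finite.pi' fun _ ↦ Set.finite_Iic (lam.colLen q)).subset fun f hf t ↦ ?_
  have := mem_iff_lt_colLen.1 (lam.up_left_mem (le_add_right le_rfl) (le_add_left le_rfl) (hf.2 t))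
  exact Set.mem_Iic.2 (by omega)

@[simp]
theorem exciteFrom_zero (p q : ℕ) : lam.exciteFrom 0 p q = 1 := by
  simp [exciteFrom, excitedSet, Subsingleton.monotone, finsum_unique]

theorem exciteFrom_eq_zero {m p q : ℕ} (h : lam.rowLen p < q + m + 1) :
    lam.exciteFrom (m + 1) p q = 0 := by
  suffices lam.excitedSet (m + 1) p q = ∅ by simp [exciteFrom, this]
  refine Set.eq_empty_of_forall_notMem fun f hf ↦ ?_
  have : (p, q + m) ∈ lam := lam.up_left_mem (by omega) (by simp; omega) (hf.2 (Fin.last m))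
  rw [mem_iff_lt_rowLen] at this
  omega

theorem excitedSet_succ {m p q : ℕ} (hpq : (p, q) ∈ lam) :
    lam.excitedSet (m + 1) p q =
      vecCons 0 '' lam.excitedSet m p (q + 1) ∪
        (· + 1) '' lam.excitedSet (m + 1) (p + 1) (q + 1) := by
  ext f
  simp only [excitedSet, Set.mem_union, Set.mem_image, Set.mem_ofPred_eq]
  constructor
  · rintro ⟨hmono, hcell⟩
    by_cases h0 : f 0 = 0
    · refine Or.inl
        ⟨vecTail f, ⟨hmono.comp Fin.strictMono_succ.monotone, fun t ↦ ?_⟩, ?_⟩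
      · convert hcell t.succ using 2 <;> simp [vecTail]
        omega
      · rw [← h0]; exact cons_head_tail f
    · have hpos (t) : 1 ≤ f t :=
        le_trans (Nat.one_le_iff_ne_zero.2 h0) (hmono (Fin.zero_le t))
      refine Or.inr
        ⟨f - 1, ⟨fun a b hab ↦ Nat.sub_le_sub_right (hmono hab) 1, fun t ↦ ?_⟩, ?_⟩
      · have := hpos t
        convert hcell t using 2 <;> simp <;> omega
      · ext t
        have := hpos t
        simp
        omega
  · rintro (⟨g, ⟨hmono, hcell⟩, rfl⟩ | ⟨g, ⟨hmono, hcell⟩, rfl⟩)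
    · refine ⟨?_, Fin.cases (by simpa using hpq) fun t ↦ ?_⟩
      · cases m with
        | zero => exact fun a b _ ↦ by rw [Fin.fin_one_eq_zero a, Fin.fin_one_eq_zero b]
        | succ m => exact monotone_vecCons.2 ⟨Nat.zero_le _, hmono⟩
      · convert hcell t using 2 <;> simp
        omega
    · refine ⟨fun a b hab ↦ Nat.add_le_add_right (hmono hab) 1, fun t ↦ ?_⟩
      convert hcell t using 2 <;> simp <;> omega

theorem exciteFrom_succ {m p q : ℕ} (hpq : (p, q) ∈ lam) :
    lam.exciteFrom (m + 1) p q =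
      hookLen lam p q * lam.exciteFrom m p (q + 1) + lam.exciteFrom (m + 1) (p + 1) (q + 1) := by
  have hdisj : Disjoint (vecCons 0 '' lam.excitedSet m p (q + 1))
      ((· + 1) '' lam.excitedSet (m + 1) (p + 1) (q + 1)) := by
    refine Set.disjoint_left.2 ?_
    rintro _ ⟨g, -, rfl⟩ ⟨g', -, h⟩
    simpa using congrFun h 0
  rw [exciteFrom, excitedSet_succ lam hpq,
    finsum_mem_union hdisj ((lam.excitedSet_finite _ _ _).image _)
      ((lam.excitedSet_finite _ _ _).image _),
    finsum_mem_image fun _ _ _ _ h ↦ (vecCons_inj.1 h).2,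
    finsum_mem_image (add_left_injective 1).injOn, exciteFrom, exciteFrom, mul_finsum_mem]
  congr 1 <;> refine finsum_mem_congr rfl fun g _ ↦ ?_
  · rw [Fin.prod_univ_succ]
    congr 1
    · simp
    · refine Finset.prod_congr rfl fun t _ ↦ ?_
      rw [cons_val_succ, Fin.val_succ]
      congr 1
      omega
  · refine Finset.prod_congr rfl fun t _ ↦ ?_
    simp only [Pi.add_apply, Pi.one_apply]
    congr 1 <;> omega

section rowSeries

variable (K : Type*) [Field K]

theorem linProd_hookLen_row {p q k k₂ : ℕ} (hk : lam.rowLen p - q = k)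
    (hk₂ : lam.rowLen (p + 1) - q = k₂) :
    linProd (range k) (fun j ↦ (hookLen lam p (q + j) : K)) =
      linProd (range k₂) (fun j ↦ (hookLen lam (p + 1) (q + j) : K) + (k - k₂ + 1 : ℕ)) *
        linProd (range (k - k₂ + 1)) (fun i ↦ (i : K)) := by
  have hrow := lam.rowLen_anti p (p + 1) p.le_succ
  obtain ⟨r, rfl⟩ := Nat.exists_eq_add_of_le (show k₂ ≤ k by omega)
  rw [Nat.add_sub_cancel_left, ← linProd_range_sub_natCast, linProd, linProd, linProd,
    prod_range_add]
  congr 1 <;> refine prod_congr rfl fun j hj ↦ ?_ <;> rw [mem_range] at hj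
  · rw [hookLen_eq_hookLen_succ_add lam (mem_iff_lt_rowLen.2 (by omega)), Nat.cast_add,
      show lam.rowLen p - lam.rowLen (p + 1) = r by omega]
  · rw [hookLen_of_succ_notMem lam (mem_iff_lt_rowLen.2 (by omega))
      (fun h ↦ by rw [mem_iff_lt_rowLen] at h; omega),
      show lam.rowLen p - (q + (k₂ + j)) = r - j by omega]

/-- The denominator `(1 + X)⋯(1 + n X)` carries the trivial factor `1 + 0 X`, which becomes
`1 + e X` when all constants are shifted by `e`. -/
noncomputable def rowSeries (m p q : ℕ) : K⟦X⟧ :=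
  linProd (range (lam.rowLen p - q)) (fun j ↦ (hookLen lam p (q + j) : K)) *
    (linProd (range (lam.rowLen p - q - m + 1)) (fun i ↦ (i : K)))⁻¹

@[simp]
theorem constantCoeff_rowSeries (m p q : ℕ) : constantCoeff (lam.rowSeries K m p q) = 1 := by
  simp [rowSeries]

theorem rowSeries_succ {m p q : ℕ} (hpq : (p, q) ∈ lam) :
    lam.rowSeries K (m + 1) p q =
      (1 + C (hookLen lam p q : K) * X) * lam.rowSeries K m p (q + 1) := by
  have hk : lam.rowLen p - q = lam.rowLen p - (q + 1) + 1 := by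
    have := mem_iff_lt_rowLen.1 hpq; omega
  rw [rowSeries, rowSeries, hk, Nat.add_sub_add_right, linProd, prod_range_succ', ← linProd,
    add_zero, mul_comm _ (1 + _), mul_assoc]
  simp_rw [← add_assoc, add_right_comm q _ 1]

theorem coeff_succ_rowSeries_of_le {m p q : ℕ} (h : lam.rowLen (p + 1) - q ≤ m)
    (hm : m ≤ lam.rowLen p - q) : coeff (m + 1) (lam.rowSeries K m p q) = 0 := by
  rw [rowSeries]
  generalize hk : lam.rowLen p - q = k at hm
  generalize hk₂ : lam.rowLen (p + 1) - q = k₂ at h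
  rw [linProd_hookLen_row lam K hk hk₂, show k - k₂ + 1 = (k - m + 1) + (m - k₂) by omega,
    linProd_range_add_natCast (k - m + 1), mul_mul_mul_inv_cancel_right (by simp),
    linProd_mul_linProd, coeff_linProd_of_card_lt]
  simp
  omega

theorem coeff_succ_rowSeries {m p q : ℕ} (h : m + 1 ≤ lam.rowLen (p + 1) - q) :
    coeff (m + 1) (lam.rowSeries K m p q) = coeff (m + 1) (lam.rowSeries K (m + 1) (p + 1) q) := by
  have hle : lam.rowLen (p + 1) - q ≤ lam.rowLen p - q :=
    Nat.sub_le_sub_right (lam.rowLen_anti p (p + 1) p.le_succ) q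
  rw [rowSeries, rowSeries]
  generalize hk : lam.rowLen p - q = k at hle
  generalize hk₂ : lam.rowLen (p + 1) - q = k₂ at h hle
  rw [linProd_hookLen_row lam K hk hk₂, show k - m + 1 = (k - k₂ + 1) + (k₂ - m) by omega,
    linProd_range_add_natCast (k - k₂ + 1), mul_mul_mul_inv_cancel_left (by simp),
    coeff_linProd_add_natCast_mul_inv (by simp; omega), show k₂ - (m + 1) + 1 = k₂ - m by omega]

theorem exciteFrom_eq_coeff_rowSeries {m p q : ℕ} (hm : m ≤ lam.rowLen p - q) :
    (lam.exciteFrom m p q : K) = coeff m (lam.rowSeries K m p q) := by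
  induction h : lam.rowLen p - q using Nat.strong_induction_on generalizing m p q with
  | _ k ih =>
  rcases m with _ | m
  · simp
  have hpq : (p, q) ∈ lam := mem_iff_lt_rowLen.2 (by omega)
  have hrow := lam.rowLen_anti p (p + 1) p.le_succ
  rw [exciteFrom_succ lam hpq, rowSeries_succ lam K hpq, coeff_succ_one_add_C_mul_X_mul,
    ← ih _ (by omega) (by omega) rfl, Nat.cast_add, Nat.cast_mul, add_comm]
  congr 1
  by_cases h₂ : m + 1 ≤ lam.rowLen (p + 1) - (q + 1)
  · rw [coeff_succ_rowSeries lam K h₂, ← ih _ (by omega) h₂ rfl]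
  · rw [exciteFrom_eq_zero lam (by omega), coeff_succ_rowSeries_of_le lam K (by omega) (by omega),
      Nat.cast_zero]

end rowSeries

end YoungDiagram

/-- for a partition λ with first row of length k = λ₁ and first-row hook
lengths a₁ > … > a_k, and m ≤ k, E_m(λ) is the coefficient of X^m in the power series
(1+a₁X)⋯(1+a_kX) / ((1+X)(1+2X)⋯(1+(k−m)X)). -/
theorem excite_eq_powerSeries_coeff (lam : YoungDiagram) (m : ℕ)
    (hm : m ≤ lam.rowLen 0) :
    (excite lam m : ℚ) =
      PowerSeries.coeff m
        ((∏ j ∈ Finset.range (lam.rowLen 0),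
            (1 + PowerSeries.C (hookLen lam 0 j : ℚ) * PowerSeries.X)) *
          (∏ j ∈ Finset.Icc 1 (lam.rowLen 0 - m),
            (1 + PowerSeries.C (j : ℚ) * PowerSeries.X))⁻¹) := by
  rw [lam.excite_eq_exciteFrom, lam.exciteFrom_eq_coeff_rowSeries ℚ (by simpa using hm),
    YoungDiagram.rowSeries, Nat.sub_zero, linProd_range_succ_natCast]
  simp [linProd]
end

section
/- Let λ be a partition whose first row has p + ℓ cells and whose second row has p cells (p ≥ 1, ℓ ≥ 0). Let λ̃ be the partition obtained by removing the first column of λ, and λ̂ the partition obtained by removing the first row of λ̃. Then for every positive integer m, E_m(λ) = a₁ · E_{m−1}(λ̃) + E_m(λ̂), where a₁ = h_{1,1} is the hook length of the top-left cell of λ. -/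
/-!
Split the tuples `f` indexing `E_m(λ)` according to whether `f 0 = 0`. Those with `f 0 = 0` are
`Fin.cons 0 g` with `g` indexing `E_{m-1}(λ̃)`, and contribute `h_{1,1}` times the term of `g`.
Those with `f 0 ≠ 0` are, by monotonicity, positive everywhere, and `f - 1` indexes `E_m(λ̂)`.
Both bijections preserve the products because the hook lengths of `λ̃` and `λ̂` are those of `λ`
shifted by one column, resp. by one row and one column.
-/

def exciteSet (lam : YoungDiagram) (m : ℕ) : Set (Fin m → ℕ) :=
  {f | Monotone f ∧ ∀ t : Fin m, (f t, f t + (t : ℕ)) ∈ lam}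

def exciteTerm (lam : YoungDiagram) {m : ℕ} (f : Fin m → ℕ) : ℕ :=
  ∏ t : Fin m, hookLen lam (f t) (f t + (t : ℕ))

theorem excite_eq_finsum_exciteSet (lam : YoungDiagram) (m : ℕ) :
    excite lam m = ∑ᶠ f ∈ exciteSet lam m, exciteTerm lam f :=
  rfl

theorem exciteSet_finite (lam : YoungDiagram) (m : ℕ) : (exciteSet lam m).Finite := by
  refine (Set.Finite.pi fun _ : Fin m => Set.finite_Iio (lam.colLen 0)).subset ?_
  intro f hf t _
  exact YoungDiagram.mem_iff_lt_colLen.mp (lam.up_left_mem le_rfl (Nat.zero_le _) (hf.2 t))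

theorem Fin.monotone_cons_iff {α : Type*} [Preorder α] {n : ℕ} {a : α} {g : Fin n → α} :
    Monotone (Fin.cons a g : Fin (n + 1) → α) ↔ (∀ i, a ≤ g i) ∧ Monotone g := by
  simpa only [monotone_iff_forall_lt, Relator.LiftFun] using
    Fin.liftFun_cons (α := α) (· ≤ ·) (f := g) (a := a)

section Shift

variable {μ ν : YoungDiagram}

theorem hookLen_transpose (μ : YoungDiagram) (i j : ℕ) :
    hookLen μ.transpose j i = hookLen μ i j := by
  simp only [hookLen, YoungDiagram.rowLen_transpose, YoungDiagram.colLen_transpose]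
  omega

theorem hookLen_eq_hookLen_succ_col (h : ∀ i j, (i, j) ∈ μ ↔ (i, j + 1) ∈ ν) (i j : ℕ) :
    hookLen μ i j = hookLen ν i (j + 1) := by
  have hrow : μ.rowLen i = ν.rowLen i - 1 := eq_of_forall_lt_iff fun k => by
    rw [← YoungDiagram.mem_iff_lt_rowLen, h, YoungDiagram.mem_iff_lt_rowLen]; omega
  have hcol : μ.colLen j = ν.colLen (j + 1) := eq_of_forall_lt_iff fun k => by
    rw [← YoungDiagram.mem_iff_lt_colLen, h, YoungDiagram.mem_iff_lt_colLen]
  simp only [hookLen, hrow, hcol]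
  omega

theorem hookLen_eq_hookLen_succ_row (h : ∀ i j, (i, j) ∈ μ ↔ (i + 1, j) ∈ ν) (i j : ℕ) :
    hookLen μ i j = hookLen ν (i + 1) j := by
  have hT : ∀ i j, (i, j) ∈ μ.transpose ↔ (i, j + 1) ∈ ν.transpose := fun i j => by
    simp only [YoungDiagram.mem_transpose, Prod.swap_prod_mk, h]
  rw [← hookLen_transpose μ, ← hookLen_transpose ν, hookLen_eq_hookLen_succ_col hT]

end Shift

section Recursion

variable {lam tlam hatlam : YoungDiagram}

theorem cons_zero_mem_exciteSet_iff (htlam : ∀ i j : ℕ, (i, j) ∈ tlam ↔ (i, j + 1) ∈ lam)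
    (h00 : (0, 0) ∈ lam) {n : ℕ} {g : Fin n → ℕ} :
    (Fin.cons 0 g : Fin (n + 1) → ℕ) ∈ exciteSet lam (n + 1) ↔ g ∈ exciteSet tlam n := by
  simp only [exciteSet, Set.mem_ofPred_eq, Fin.monotone_cons_iff, Fin.forall_fin_succ,
    Fin.cons_zero, Fin.cons_succ, Fin.val_zero, Fin.val_succ, htlam, ← add_assoc]
  simp [h00]

theorem exciteTerm_cons_zero (htlam : ∀ i j : ℕ, (i, j) ∈ tlam ↔ (i, j + 1) ∈ lam)
    {n : ℕ} (g : Fin n → ℕ) :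
    exciteTerm lam (Fin.cons 0 g : Fin (n + 1) → ℕ) = hookLen lam 0 0 * exciteTerm tlam g := by
  simp only [exciteTerm, Fin.prod_univ_succ, Fin.cons_zero, Fin.cons_succ, Fin.val_zero,
    Fin.val_succ, hookLen_eq_hookLen_succ_col htlam, add_assoc]

theorem add_one_mem_exciteSet_iff (htlam : ∀ i j : ℕ, (i, j) ∈ tlam ↔ (i, j + 1) ∈ lam)
    (hhatlam : ∀ i j : ℕ, (i, j) ∈ hatlam ↔ (i + 1, j) ∈ tlam) {m : ℕ} {g : Fin m → ℕ} :
    g + 1 ∈ exciteSet lam m ↔ g ∈ exciteSet hatlam m := by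
  simp only [exciteSet, Set.mem_ofPred_eq, hhatlam, htlam, Pi.add_apply, Pi.one_apply,
    add_right_comm _ 1]
  exact and_congr_left' ⟨fun h _ _ hab => Nat.le_of_add_le_add_right (h hab), (·.add_const 1)⟩

theorem exciteTerm_add_one (htlam : ∀ i j : ℕ, (i, j) ∈ tlam ↔ (i, j + 1) ∈ lam)
    (hhatlam : ∀ i j : ℕ, (i, j) ∈ hatlam ↔ (i + 1, j) ∈ tlam) {m : ℕ} (g : Fin m → ℕ) :
    exciteTerm lam (g + 1) = exciteTerm hatlam g := by
  simp only [exciteTerm, hookLen_eq_hookLen_succ_row hhatlam, hookLen_eq_hookLen_succ_col htlam,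
    Pi.add_apply, Pi.one_apply, add_right_comm _ 1]

theorem finsum_exciteSet_inter_head_eq_zero (htlam : ∀ i j : ℕ, (i, j) ∈ tlam ↔ (i, j + 1) ∈ lam)
    (n : ℕ) :
    ∑ᶠ f ∈ exciteSet lam (n + 1) ∩ {f | f 0 = 0}, exciteTerm lam f =
      hookLen lam 0 0 * excite tlam n := by
  by_cases h00 : (0, 0) ∈ lam
  · have hbij : Set.BijOn (Fin.cons 0) (exciteSet tlam n)
        (exciteSet lam (n + 1) ∩ {f | f 0 = 0}) := by
      refine ⟨fun g hg => ⟨(cons_zero_mem_exciteSet_iff htlam h00).mpr hg, Fin.cons_zero _ _⟩,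
        (Fin.cons_right_injective _).injOn, fun f ⟨hf, hf0⟩ => ?_⟩
      have hcons : Fin.cons 0 (Fin.tail f) = f := hf0 ▸ Fin.cons_self_tail f
      exact ⟨Fin.tail f, (cons_zero_mem_exciteSet_iff htlam h00).mp (hcons ▸ hf), hcons⟩
    rw [excite_eq_finsum_exciteSet, mul_finsum_mem,
      finsum_mem_eq_of_bijOn _ hbij fun g _ => (exciteTerm_cons_zero htlam g).symm]
  · have hempty : exciteSet lam (n + 1) ∩ {f | f 0 = 0} = ∅ := by
      refine Set.eq_empty_of_forall_notMem fun f ⟨hf, hf0⟩ => h00 ?_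
      simpa [show f 0 = 0 from hf0] using hf.2 0
    have hhook : hookLen lam 0 0 = 0 := by
      have hrow := YoungDiagram.mem_iff_lt_rowLen.not.mp h00
      have hcol := YoungDiagram.mem_iff_lt_colLen.not.mp h00
      simp only [hookLen]
      omega
    rw [hempty, finsum_mem_empty, hhook, zero_mul]

theorem finsum_exciteSet_sdiff_head_eq_zero (htlam : ∀ i j : ℕ, (i, j) ∈ tlam ↔ (i, j + 1) ∈ lam)
    (hhatlam : ∀ i j : ℕ, (i, j) ∈ hatlam ↔ (i + 1, j) ∈ tlam) (n : ℕ) :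
    ∑ᶠ f ∈ exciteSet lam (n + 1) \ {f | f 0 = 0}, exciteTerm lam f = excite hatlam (n + 1) := by
  have hbij : Set.BijOn (· + 1) (exciteSet hatlam (n + 1))
      (exciteSet lam (n + 1) \ {f | f 0 = 0}) := by
    refine ⟨fun g hg => ⟨(add_one_mem_exciteSet_iff htlam hhatlam).mpr hg, ?_⟩,
      (add_left_injective 1).injOn, fun f ⟨hf, hf0⟩ => ?_⟩
    · simp
    have hf' : f - 1 + 1 = f := funext fun t =>
      Nat.sub_add_cancel ((Nat.one_le_iff_ne_zero.mpr hf0).trans (hf.1 (Fin.zero_le t)))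
    exact ⟨f - 1, (add_one_mem_exciteSet_iff htlam hhatlam).mp (hf' ▸ hf), hf'⟩
  rw [excite_eq_finsum_exciteSet,
    finsum_mem_eq_of_bijOn _ hbij fun g _ => (exciteTerm_add_one htlam hhatlam g).symm]

end Recursion

theorem excite_recursion_general (lam tlam hatlam : YoungDiagram)
    (htlam : ∀ i j : ℕ, (i, j) ∈ tlam ↔ (i, j + 1) ∈ lam)
    (hhatlam : ∀ i j : ℕ, (i, j) ∈ hatlam ↔ (i + 1, j) ∈ tlam)
    (m : ℕ) (hm : 1 ≤ m) :
    excite lam m = hookLen lam 0 0 * excite tlam (m - 1) + excite hatlam m := by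
  obtain ⟨n, rfl⟩ : ∃ n, m = n + 1 := ⟨m - 1, by omega⟩
  rw [Nat.add_sub_cancel, excite_eq_finsum_exciteSet,
    ← finsum_mem_inter_add_sdiff {f | f 0 = 0} (exciteSet_finite lam (n + 1)),
    finsum_exciteSet_inter_head_eq_zero htlam, finsum_exciteSet_sdiff_head_eq_zero htlam hhatlam]

/-- let λ have first row of p + ℓ cells and second row of p cells (p ≥ 1),
let λ̃ be λ with its first column removed and λ̂ be λ̃ with its first row removed. Then
for every m ≥ 1, E_m(λ) = h_{1,1}(λ) · E_{m−1}(λ̃) + E_m(λ̂). -/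
theorem excite_recursion (p ℓ : ℕ) (hp : 1 ≤ p) (lam tlam hatlam : YoungDiagram)
    (hrow1 : lam.rowLen 0 = p + ℓ) (hrow2 : lam.rowLen 1 = p)
    (htlam : ∀ i j : ℕ, (i, j) ∈ tlam ↔ (i, j + 1) ∈ lam)
    (hhatlam : ∀ i j : ℕ, (i, j) ∈ hatlam ↔ (i + 1, j) ∈ tlam)
    (m : ℕ) (hm : 1 ≤ m) :
    excite lam m = hookLen lam 0 0 * excite tlam (m - 1) + excite hatlam m :=
  excite_recursion_general lam tlam hatlam htlam hhatlam m hm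
end

section
/- Let λ be a partition of n ≥ 2. Then there exists a positive-integer rectangle partition μ = [a, a, …, a] (b parts, each equal to a, with a, b ≥ 1) such that μ is not contained in λ, the partition μ̃ = [a, …, a, a−1] (the unique 1-minor of μ) is contained in λ, and a·b < 2n/log n. -/
/-
If `(colLen j, j)` is an addable cell of `λ` (column `j` is strictly shorter than all earlier
columns), then the `(colLen j + 1) × (j + 1)` rectangle is not contained in `λ` while its minor is.
Every column has the same length as such a column further left, so if all these rectangles had
area `≥ T := 2n / log n`, then `colLen j ≥ T / (j + 1) - 1` for every `j`. Summing over
`j < ⌊T⌋` and using `H_J ≥ log (J + 1)` gives `n > T (log T - 1)`. With `L = log n`,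
`T (log T - 1) = 2n - (2n / L) (log (L / 2) + 1) ≥ n` by `log y ≤ y - 1`, a contradiction.
-/

/-- The b × a rectangle partition [a, a, …, a] (b parts). -/
def rectD (a b : ℕ) : YoungDiagram :=
  YoungDiagram.ofRowLens (List.replicate b a) (List.sortedGE_iff_pairwise.mpr (List.pairwise_replicate.mpr (by simp)))

/-- The unique 1-minor [a, …, a, a−1] of the b × a rectangle partition. -/
def rectMinorD (a b : ℕ) : YoungDiagram :=
  YoungDiagram.ofRowLens (List.replicate (b - 1) a ++ [a - 1]) (by
    apply List.sortedGE_iff_pairwise.mpr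
    apply List.pairwise_append.mpr
    refine ⟨List.pairwise_replicate.mpr (by simp), by simp, ?_⟩
    intro x hx y hy
    simp at hx hy
    omega)

open Real Finset

namespace YoungDiagram

theorem mem_rectD {a b : ℕ} {p : ℕ × ℕ} : p ∈ rectD a b ↔ p.1 < b ∧ p.2 < a := by
  simp [rectD, mem_ofRowLens]

theorem mem_rectMinorD {a b : ℕ} (hb : 1 ≤ b) {p : ℕ × ℕ} :
    p ∈ rectMinorD a b ↔ (p.1 < b - 1 ∧ p.2 < a) ∨ (p.1 = b - 1 ∧ p.2 < a - 1) := by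
  simp only [rectMinorD, mem_ofRowLens, List.length_append, List.length_replicate,
    List.length_singleton, List.getElem_append, List.getElem_replicate]
  constructor
  · rintro ⟨hrow, hcol⟩
    split_ifs at hcol <;> simp_all; omega
  · rintro (⟨hrow, hcol⟩ | ⟨hrow, hcol⟩) <;> exact ⟨by omega, by simp [hrow, hcol]⟩

theorem not_rectD_colLen_le (μ : YoungDiagram) (j : ℕ) :
    ¬ rectD (j + 1) (μ.colLen j + 1) ≤ μ := fun hle =>
  (lt_irrefl (μ.colLen j)) (mem_iff_lt_colLen.1 (hle (mem_rectD.2 ⟨by omega, by omega⟩)))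

theorem rectMinorD_colLen_le {μ : YoungDiagram} {j : ℕ}
    (hcorner : ∀ k < j, μ.colLen j < μ.colLen k) :
    rectMinorD (j + 1) (μ.colLen j + 1) ≤ μ := by
  rintro ⟨r, c⟩ hp
  rw [mem_rectMinorD (by omega)] at hp
  rw [mem_iff_lt_colLen]
  rcases hp with ⟨hr, hc⟩ | ⟨hr, hc⟩
  · have := μ.colLen_anti c j (by omega)
    omega
  · have := hcorner c (by omega)
    omega

theorem exists_le_colLen_eq_forall_colLen_lt (μ : YoungDiagram) (j : ℕ) :
    ∃ i ≤ j, μ.colLen i = μ.colLen j ∧ ∀ k < i, μ.colLen i < μ.colLen k := by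
  classical
  have hex : ∃ i, μ.colLen i = μ.colLen j := ⟨j, rfl⟩
  refine ⟨Nat.find hex, Nat.find_min' hex rfl, Nat.find_spec hex, fun k hk => ?_⟩
  have hne := Nat.find_min hex hk
  have hle := μ.colLen_anti k _ hk.le
  rw [Nat.find_spec hex] at hle ⊢
  omega

theorem exists_rect_area_le_colLen (μ : YoungDiagram) (j : ℕ) :
    ∃ a b : ℕ, 1 ≤ a ∧ 1 ≤ b ∧ ¬ rectD a b ≤ μ ∧ rectMinorD a b ≤ μ ∧
      a * b ≤ (j + 1) * (μ.colLen j + 1) := by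
  obtain ⟨i, hij, heq, hcorner⟩ := μ.exists_le_colLen_eq_forall_colLen_lt j
  refine ⟨i + 1, μ.colLen i + 1, by omega, by omega, μ.not_rectD_colLen_le i,
    rectMinorD_colLen_le hcorner, ?_⟩
  rw [heq]
  gcongr

theorem sum_colLen_le_card (μ : YoungDiagram) (J : ℕ) :
    ∑ j ∈ range J, μ.colLen j ≤ μ.card := by
  classical
  have hdisj : ((range J : Finset ℕ) : Set ℕ).PairwiseDisjoint μ.col := by
    intro i _ k _ hik
    exact disjoint_filter.2 fun c _ hi hk => hik (hi.symm.trans hk)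
  calc ∑ j ∈ range J, μ.colLen j = ((range J).biUnion μ.col).card := by
        rw [card_biUnion hdisj]
        exact sum_congr rfl fun j _ => μ.colLen_eq_card
    _ ≤ μ.card := card_le_card (biUnion_subset.2 fun j _ => filter_subset _ _)

end YoungDiagram

theorem mul_log_sub_one_lt_of_sum_le {c : ℕ → ℝ} {T N : ℝ} (hT : 0 < T)
    (harea : ∀ j : ℕ, T ≤ (j + 1) * (c j + 1)) (hsum : ∀ J, ∑ j ∈ range J, c j ≤ N) :
    T * (log T - 1) < N := by
  set J := ⌊T⌋₊
  have hJ : (J : ℝ) ≤ T := Nat.floor_le hT.le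
  have hlog : log T < harmonic J := by
    calc log T < log ((J + 1 : ℕ) : ℝ) := by
          gcongr; push_cast; exact Nat.lt_floor_add_one T
      _ ≤ harmonic J := log_add_one_le_harmonic J
  have hc : ∀ j : ℕ, T * ((j + 1 : ℕ) : ℝ)⁻¹ - 1 ≤ c j := fun j => by
    have := harea j
    rw [sub_le_iff_le_add, ← div_eq_mul_inv, div_le_iff₀ (by positivity)]
    push_cast
    linarith
  calc T * (log T - 1) < T * harmonic J - J := by nlinarith
    _ = ∑ j ∈ range J, (T * ((j + 1 : ℕ) : ℝ)⁻¹ - 1) := by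
        simp [harmonic, sum_sub_distrib, mul_sum]
    _ ≤ ∑ j ∈ range J, c j := sum_le_sum fun j _ => hc j
    _ ≤ N := hsum J

theorem le_two_mul_div_log_mul_log_sub_one {x : ℝ} (hx : 1 < x) :
    x ≤ 2 * x / log x * (log (2 * x / log x) - 1) := by
  set L := log x
  have hL : 0 < L := log_pos hx
  have hx0 : 0 < x := by linarith
  have hlogL : log (L / 2) ≤ L / 2 - 1 := log_le_sub_one_of_pos (by positivity)
  have hlogT : log (2 * x / L) - 1 = L - (log (L / 2) + 1) := by
    rw [log_div (by positivity) hL.ne', log_mul two_ne_zero hx0.ne',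
      log_div hL.ne' two_ne_zero]
    ring
  rw [hlogT, mul_sub, div_mul_cancel₀ _ hL.ne', le_sub_comm]
  calc 2 * x / L * (log (L / 2) + 1) ≤ 2 * x / L * (L / 2) := by gcongr; linarith
    _ = 2 * x - x := by field_simp; ring

/-- for every partition λ of n ≥ 2 there exist a, b ≥ 1 such that the
b × a rectangle [a,…,a] is not contained in λ, its unique 1-minor [a,…,a,a−1] is
contained in λ, and a·b < 2n / log n. -/
theorem exists_rect_minor (n : ℕ) (hn : 2 ≤ n) (lam : YoungDiagram) (hlam : lam.card = n) :
    ∃ a b : ℕ, 1 ≤ a ∧ 1 ≤ b ∧ ¬ rectD a b ≤ lam ∧ rectMinorD a b ≤ lam ∧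
      (a * b : ℝ) < 2 * n / Real.log n := by
  by_contra! hbig
  have hn1 : (1 : ℝ) < n := by exact_mod_cast hn
  have harea : ∀ j : ℕ, 2 * n / log n ≤ (j + 1) * ((lam.colLen j : ℝ) + 1) := fun j => by
    obtain ⟨a, b, ha, hb, hrect, hminor, hab⟩ := lam.exists_rect_area_le_colLen j
    calc 2 * n / log n ≤ a * b := hbig a b ha hb hrect hminor
      _ ≤ _ := by exact_mod_cast hab
  have hsum : ∀ J, ∑ j ∈ range J, (lam.colLen j : ℝ) ≤ n := fun J => by
    exact_mod_cast hlam ▸ lam.sum_colLen_le_card J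
  have hT : 0 < 2 * (n : ℝ) / log n := by have := log_pos hn1; positivity
  linarith [mul_log_sub_one_lt_of_sum_le hT harea hsum, le_two_mul_div_log_mul_log_sub_one hn1]
end

section
/- Let λ be a partition of n, let m be a positive integer, and suppose that every partition of size at most m is contained in λ. Then n ≥ m + ⌊m/2⌋ + ⌊m/3⌋ + … + ⌊m/m⌋. -/
/-! The rectangle with `d` rows of length `⌊m/d⌋` has at most `m` cells, so it fits inside `λ`,
forcing the `d`-th row of `λ` to have at least `⌊m/d⌋` cells. Summing over the first `m` rows,
which are disjoint pieces of `λ`, gives the bound. -/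

namespace YoungDiagram

def rect (a b : ℕ) : YoungDiagram where
  cells := Finset.range a ×ˢ Finset.range b
  isLowerSet _ _ hle hmem := by
    simp only [Finset.coe_product, Finset.coe_range, Set.mem_prod, Set.mem_Iio] at hmem ⊢
    exact ⟨hle.1.trans_lt hmem.1, hle.2.trans_lt hmem.2⟩

theorem mem_rect {a b i j : ℕ} : (i, j) ∈ rect a b ↔ i < a ∧ j < b := by
  simp [← mem_cells, rect]

theorem card_rect (a b : ℕ) : (rect a b).card = a * b :=
  (Finset.card_product _ _).trans (by simp)

theorem le_rowLen_of_rect_le {μ : YoungDiagram} {a b i : ℕ} (h : rect a b ≤ μ) (hi : i < a) :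
    b ≤ μ.rowLen i := by
  obtain _ | b := b
  · exact Nat.zero_le _
  · exact mem_iff_lt_rowLen.mp (h (mem_rect.mpr ⟨hi, b.lt_succ_self⟩))

theorem sum_rowLen_le_card (μ : YoungDiagram) (s : Finset ℕ) : ∑ i ∈ s, μ.rowLen i ≤ μ.card := by
  simpa only [rowLen_eq_card, row, Finset.card_eq_sum_ones] using
    Finset.sum_fiberwise_le_sum_of_sum_fiber_nonneg (s := μ.cells) (t := s) (g := Prod.fst)
      (f := fun _ => (1 : ℕ)) fun _ _ => Nat.zero_le _

end YoungDiagram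

theorem card_ge_sum_div_general (lam : YoungDiagram) (n m : ℕ) (hn : lam.card = n)
    (h : ∀ μ : YoungDiagram, μ.card ≤ m → μ ≤ lam) :
    ∑ d ∈ Finset.Icc 1 m, m / d ≤ n := by
  have row_ge (d : ℕ) (hd : 1 ≤ d) : m / d ≤ lam.rowLen (d - 1) :=
    YoungDiagram.le_rowLen_of_rect_le
      (h _ ((YoungDiagram.card_rect d (m / d)).trans_le (Nat.mul_div_le m d))) (by omega)
  calc ∑ d ∈ Finset.Icc 1 m, m / d
      ≤ ∑ d ∈ Finset.Icc 1 m, lam.rowLen (d - 1) :=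
        Finset.sum_le_sum fun d hd => row_ge d (Finset.mem_Icc.mp hd).1
    _ = ∑ i ∈ (Finset.Icc 1 m).image (· - 1), lam.rowLen i := by
        rw [Finset.sum_image fun x hx y hy hxy => by
          simp only [Finset.coe_Icc, Set.mem_Icc] at hx hy; omega]
    _ ≤ n := hn ▸ lam.sum_rowLen_le_card _

/-- if every partition of size at most m (m ≥ 1) is contained in λ, a
partition of n, then n ≥ ⌊m/1⌋ + ⌊m/2⌋ + … + ⌊m/m⌋. -/
theorem card_ge_sum_div (lam : YoungDiagram) (n m : ℕ) (hn : lam.card = n) (hm : 1 ≤ m)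
    (h : ∀ μ : YoungDiagram, μ.card ≤ m → μ ≤ lam) :
    ∑ d ∈ Finset.Icc 1 m, m / d ≤ n :=
  card_ge_sum_div_general lam n m hn h
end

section
/- For every partition τ, E₂(τ) − E₂(τᵗ) = Σ_{i=1}^{rk(τ)} h_{i,i}(τ)·(τ_i − (τᵗ)_i), where rk(τ) is the side length of the Durfee square of τ (the largest m with the m×m square contained in τ), h_{i,i}(τ) is the hook length of the diagonal cell (i,i), and τ_i, (τᵗ)_i are the i-th parts of τ and its conjugate. -/
/-!
Write `a k = rowLen k - k` and `b k = colLen k - k`, truncated at `0`. On the Durfee square,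
`E₂(λ) = Σ_{i ≤ j < d} h_{i,i} h_{j,j+1}` with `h_{j,j+1} = (a j - 1) + b (j + 1)` (also when
`(j, j + 1) ∉ λ`, both sides being `0`). Transposing swaps `a` and `b` and fixes the diagonal
hooks, so `h_{j,j+1}(λ) - h_{j,j+1}(λᵗ) = (a j - b j) - (a (j + 1) - b (j + 1))`, and the inner
sums telescope to `a i - b i = λ_i - λᵗ_i`, since `a d = b d = 0`.
-/

open Finset YoungDiagram

section

variable (lam : YoungDiagram)

lemma hookLen_transpose_s18 (i j : ℕ) : hookLen lam.transpose i j = hookLen lam j i := by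
  simp only [hookLen, rowLen_transpose, colLen_transpose, add_comm]

variable {lam}

lemma hookLen_eq_zero_of_notMem {i j : ℕ} (h : (i, j) ∉ lam) : hookLen lam i j = 0 := by
  have hr : lam.rowLen i ≤ j := not_lt.1 (mt mem_iff_lt_rowLen.2 h)
  have hc : lam.colLen j ≤ i := not_lt.1 (mt mem_iff_lt_colLen.2 h)
  simp only [hookLen]
  omega

lemma excite_two_eq_sum {d : ℕ} (hd : ∀ k : ℕ, (k, k) ∈ lam ↔ k < d) :
    excite lam 2 =
      ∑ i ∈ range d, ∑ j ∈ Ico i d, hookLen lam i i * hookLen lam j (j + 1) := by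
  set F : (Fin 2 → ℕ) → ℕ := fun f => ∏ t : Fin 2, hookLen lam (f t) (f t + (t : ℕ))
  have hF : ∀ f, F f = hookLen lam (f 0) (f 0) * hookLen lam (f 1) (f 1 + 1) := fun f => by
    simp [F, Fin.prod_univ_two]
  have hmono : ∀ f : Fin 2 → ℕ, Monotone f ↔ f 0 ≤ f 1 := fun f => by
    simp [Fin.monotone_iff_le_succ, Fin.forall_fin_one]
  -- a term with a cell outside `lam` has a zero hook-length factor
  calc excite lam 2
      = ∑ᶠ f ∈ {f : Fin 2 → ℕ | f 0 ≤ f 1 ∧ f 1 < d}, F f := by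
        refine finsum_mem_inter_support_eq' F _ _ fun f hf => ?_
        rw [Function.mem_support, hF, mul_ne_zero_iff] at hf
        have h0 : (f 0, f 0) ∈ lam := not_imp_comm.1 hookLen_eq_zero_of_notMem hf.1
        have h1 : (f 1, f 1 + 1) ∈ lam := not_imp_comm.1 hookLen_eq_zero_of_notMem hf.2
        have h1' : f 1 < d := (hd _).1 (lam.up_left_mem le_rfl (Nat.le_succ _) h1)
        simp [hmono, Fin.forall_fin_two, h0, h1, h1']
    _ = ∑ᶠ p ∈ ((range d).sigma (Ico · d) : Set (Σ _ : ℕ, ℕ)),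
          hookLen lam p.1 p.1 * hookLen lam p.2 (p.2 + 1) := by
        refine finsum_mem_eq_of_bijOn (fun f => ⟨f 0, f 1⟩) ⟨?_, ?_, ?_⟩ fun f _ => hF f
        · rintro f ⟨h01, h1⟩
          simp only [coe_sigma, Set.mem_sigma_iff, coe_range, Set.mem_Iio, coe_Ico, Set.mem_Ico]
          omega
        · intro f _ g _ hfg
          simp only [Sigma.mk.injEq, heq_eq_eq] at hfg
          funext t
          fin_cases t
          exacts [hfg.1, hfg.2]
        · rintro ⟨i, j⟩ hij
          simp only [coe_sigma, Set.mem_sigma_iff, coe_range, Set.mem_Iio, coe_Ico,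
            Set.mem_Ico] at hij
          exact ⟨![i, j], ⟨hij.2.1, hij.2.2⟩, rfl⟩
    _ = _ := by rw [finsum_mem_coe_finset, sum_sigma]

lemma hookLen_self_succ (j : ℕ) :
    hookLen lam j (j + 1) = (lam.rowLen j - (j + 1)) + (lam.colLen (j + 1) - (j + 1)) := by
  have h : j + 1 < lam.rowLen j ↔ j < lam.colLen (j + 1) :=
    mem_iff_lt_rowLen.symm.trans mem_iff_lt_colLen
  simp only [hookLen]
  omega

variable (lam) in
/-- Arm minus leg of the diagonal cell `(k, k)`; the truncated subtractions make it `0` when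
`(k, k) ∉ lam`. -/
def diagArmSubLeg (k : ℕ) : ℤ :=
  ((lam.rowLen k - k : ℕ) : ℤ) - ((lam.colLen k - k : ℕ) : ℤ)

lemma diagArmSubLeg_of_mem {k : ℕ} (h : (k, k) ∈ lam) :
    diagArmSubLeg lam k = (lam.rowLen k : ℤ) - lam.colLen k := by
  have hr := mem_iff_lt_rowLen.1 h
  have hc := mem_iff_lt_colLen.1 h
  simp only [diagArmSubLeg]
  omega

lemma diagArmSubLeg_of_notMem {k : ℕ} (h : (k, k) ∉ lam) : diagArmSubLeg lam k = 0 := by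
  have hr : lam.rowLen k ≤ k := not_lt.1 (mt mem_iff_lt_rowLen.2 h)
  have hc : lam.colLen k ≤ k := not_lt.1 (mt mem_iff_lt_colLen.2 h)
  simp only [diagArmSubLeg]
  omega

lemma hookLen_self_succ_sub_hookLen_succ_self {j : ℕ} (h : (j, j) ∈ lam) :
    (hookLen lam j (j + 1) : ℤ) - hookLen lam (j + 1) j =
      diagArmSubLeg lam j - diagArmSubLeg lam (j + 1) := by
  have hr := mem_iff_lt_rowLen.1 h
  have hc := mem_iff_lt_colLen.1 h
  rw [hookLen_self_succ, ← hookLen_transpose_s18, hookLen_self_succ]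
  simp only [diagArmSubLeg, rowLen_transpose, colLen_transpose]
  omega

lemma sum_Ico_hookLen_self_succ_sub {d i : ℕ} (hd : ∀ k : ℕ, (k, k) ∈ lam ↔ k < d)
    (hi : i < d) :
    ∑ j ∈ Ico i d, ((hookLen lam j (j + 1) : ℤ) - hookLen lam (j + 1) j) =
      (lam.rowLen i : ℤ) - lam.colLen i := by
  calc ∑ j ∈ Ico i d, ((hookLen lam j (j + 1) : ℤ) - hookLen lam (j + 1) j)
      = -∑ j ∈ Ico i d, (diagArmSubLeg lam (j + 1) - diagArmSubLeg lam j) := by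
        rw [← sum_neg_distrib]
        refine sum_congr rfl fun j hj => ?_
        rw [neg_sub, hookLen_self_succ_sub_hookLen_succ_self ((hd j).2 (mem_Ico.1 hj).2)]
    _ = diagArmSubLeg lam i - diagArmSubLeg lam d := by rw [sum_Ico_sub _ hi.le, neg_sub]
    _ = (lam.rowLen i : ℤ) - lam.colLen i := by
        rw [diagArmSubLeg_of_mem ((hd i).2 hi),
          diagArmSubLeg_of_notMem (mt (hd d).1 (lt_irrefl d)), sub_zero]

end

/-- for every partition τ with Durfee square of side d,
E₂(τ) − E₂(τᵗ) = Σ_{i=1}^{d} h_{i,i}(τ) · (τ_i − (τᵗ)_i)  (0-indexed below). -/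
theorem excite_two_sub_transpose (tau : YoungDiagram) (d : ℕ)
    (hd : ∀ i : ℕ, (i, i) ∈ tau ↔ i < d) :
    (excite tau 2 : ℤ) - (excite tau.transpose 2 : ℤ) =
      ∑ i ∈ Finset.range d,
        (hookLen tau i i : ℤ) * ((tau.rowLen i : ℤ) - (tau.colLen i : ℤ)) := by
  have hdT : ∀ i : ℕ, (i, i) ∈ tau.transpose ↔ i < d := fun i => by
    rw [mem_transpose]
    exact hd i
  rw [excite_two_eq_sum hd, excite_two_eq_sum hdT]
  simp only [hookLen_transpose_s18, Nat.cast_sum, Nat.cast_mul, ← sum_sub_distrib, ← mul_sub]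
  exact sum_congr rfl fun i hi => by
    rw [← mul_sum, sum_Ico_hookLen_self_succ_sub hd (mem_range.1 hi)]
end
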